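/- Let n ≥ 1, V = Fin n → ℝ, W(A_{n−1}) = {P_σ : σ ∈ S_n} with (P_σ v)(i) = v(σ⁻¹ i), and let H be the intersection lattice of the type A reflection arrangement, i.e. the set of all subspaces ⋂_{(i,j) ∈ T} {v : v(i) = v(j)} over sets T of pairs of distinct indices (the empty intersection being V). Then the reflection arrangement monoid M(W(A_{n−1}), H) of partial linear isomorphisms has cardinality (as a rational number) equal to (n!)² · Σ_λ 1/(b_λ · λ_1!·λ_2!⋯λ_p!), the sum being over all partitions λ = (λ_1,…,λ_p) of n. -/

import Mathlib

/-- The set `M(G,B)` of partial linear isomorphisms `g|_X` for `g ∈ G`, `X ∈ B`. -/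
def MGB {F V : Type*} [Field F] [AddCommGroup V] [Module F V]
    (G : Set (V ≃ₗ[F] V)) (B : Set (Submodule F V)) : Set (V →ₗ.[F] V) :=
  {p | ∃ g ∈ G, ∃ X ∈ B, p = (g : V →ₗ[F] V).toPMap X}

/-- The Weyl group of type `A_{n-1}`: the permutation maps `(P_σ v) i = v (σ⁻¹ i)`. -/
def weylA (n : ℕ) : Set ((Fin n → ℝ) ≃ₗ[ℝ] (Fin n → ℝ)) :=
  {g | ∃ σ : Equiv.Perm (Fin n), ∀ (v : Fin n → ℝ) (i : Fin n), g v i = v (σ⁻¹ i)}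

/-- The hyperplane `{v : v i = v j}` of the braid arrangement. -/
def braidHyperplane {n : ℕ} (i j : Fin n) : Submodule ℝ (Fin n → ℝ) where
  carrier := {v | v i = v j}
  add_mem' := by
    intro a b ha hb
    simp only [Set.mem_setOf_eq] at *
    simp [Pi.add_apply, ha, hb]
  zero_mem' := rfl
  smul_mem' := by
    intro c v hv
    simp only [Set.mem_setOf_eq] at *
    simp [hv]

/-- The intersection lattice of the braid (type `A_{n-1}`) reflection arrangement:
all intersections of hyperplanes `v i = v j` (`i ≠ j`), the empty intersection
being the whole space. -/
def braidLattice (n : ℕ) : Set (Submodule ℝ (Fin n → ℝ)) :=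
  {Z | ∃ T : Set (Fin n × Fin n), (∀ p ∈ T, p.1 ≠ p.2) ∧
    Z = sInf ((fun p : Fin n × Fin n => braidHyperplane p.1 p.2) '' T)}

/-- For a multiset of (positive) part sizes `λ` with `b_i` parts equal to `i`,
`b_λ = ∏_i b_i! (i!)^{b_i}`. -/
def bLambda (lam : Multiset ℕ) : ℕ :=
  lam.toFinset.prod fun i => (lam.count i).factorial * i.factorial ^ lam.count i

open Finset Equiv

theorem Equiv.Perm.apply_inv_self {α : Type*} (f : Equiv.Perm α) (x : α) : f (f⁻¹ x) = x :=
  Equiv.apply_symm_apply f x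

theorem Equiv.Perm.inv_apply_self {α : Type*} (f : Equiv.Perm α) (x : α) : f⁻¹ (f x) = x :=
  Equiv.symm_apply_apply f x

section aux
/-- Fiber-count as multiset count. -/
lemma card_fiber_eq_count {α : Type*} [Fintype α] (f : α → ℕ) (m : ℕ) :
    Nat.card {a // f a = m} = (Finset.univ.val.map f).count m := by
  classical
  rw [Multiset.count_map, Nat.card_eq_fintype_card, Fintype.card_subtype]
  simp [eq_comm, Finset.filter]

/-- Glue an equivalence from fiberwise card equalities. -/
lemma exists_equiv_of_card_fiber_eq {α β γ : Type*} [Finite α] [Finite β]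
    (f : α → γ) (g : β → γ)
    (h : ∀ c, Nat.card {a // f a = c} = Nat.card {b // g b = c}) :
    ∃ e : α ≃ β, ∀ a, g (e a) = f a := by
  classical
  have hne : ∀ c, Nonempty ({a // f a = c} ≃ {b // g b = c}) := fun c =>
    Finite.card_eq.mp (h c)
  let ec : ∀ c, {a // f a = c} ≃ {b // g b = c} := fun c => Classical.choice (hne c)
  refine ⟨(Equiv.sigmaFiberEquiv f).symm.trans
    ((Equiv.sigmaCongrRight ec).trans (Equiv.sigmaFiberEquiv g)), fun a => ?_⟩
  exact (ec (f a) ⟨a, rfl⟩).2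

lemma multiset_map_univ_equiv {α β γ : Type*} [Fintype α] [Fintype β]
    (e : α ≃ β) (h : β → γ) :
    (Finset.univ.val.map (fun a => h (e a))) = Finset.univ.val.map h := by
  have : (Finset.univ.map e.toEmbedding).val = (Finset.univ : Finset β).val := by
    rw [Finset.map_univ_equiv]
  rw [← this, Finset.map_val, Multiset.map_map]
  rfl
end aux

namespace CAMA

attribute [local instance] Classical.propDecidable

variable {n : ℕ}

instance : Finite (Setoid (Fin n)) :=
  Finite.of_injective (fun r : Setoid (Fin n) => (r.r : Fin n → Fin n → Prop))
    (fun r s h => Setoid.ext fun a b => by rw [show r.r = s.r from h])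

/-- The number of elements in the class `c`. -/
noncomputable def fiberCard (r : Setoid (Fin n)) (c : Quotient r) : ℕ :=
  Nat.card {i // Quotient.mk r i = c}

/-- The multiset of class sizes. -/
noncomputable def typeMS (r : Setoid (Fin n)) : Multiset ℕ :=
  Finset.univ.val.map (fiberCard r)

lemma count_typeMS (r : Setoid (Fin n)) (m : ℕ) :
    (typeMS r).count m = Nat.card {c : Quotient r // fiberCard r c = m} :=
  (card_fiber_eq_count (fiberCard r) m).symm

lemma typeMS_sum (r : Setoid (Fin n)) : (typeMS r).sum = n := by
  have h := Fintype.card_congr (Equiv.sigmaFiberEquiv (Quotient.mk r))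
  rw [Fintype.card_sigma, Fintype.card_fin] at h
  rw [typeMS]
  have h2 : (Multiset.map (fiberCard r) univ.val).sum = ∑ c : Quotient r, fiberCard r c := rfl
  rw [h2, show (∑ c : Quotient r, fiberCard r c) = ∑ c : Quotient r,
      Fintype.card {x // Quotient.mk r x = c} from
    Finset.sum_congr rfl fun c _ => by rw [fiberCard, Nat.card_eq_fintype_card]]
  exact h

lemma typeMS_pos (r : Setoid (Fin n)) {m : ℕ} (hm : m ∈ typeMS r) : 0 < m := by
  rw [typeMS, Multiset.mem_map] at hm
  obtain ⟨c, -, rfl⟩ := hm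
  obtain ⟨i, rfl⟩ := Quotient.exists_rep c
  have : Nonempty {j // Quotient.mk r j = ⟦i⟧} := ⟨⟨i, rfl⟩⟩
  exact Nat.card_pos

lemma typeMS_map_prod (r : Setoid (Fin n)) (f : ℕ → ℕ) :
    ((typeMS r).map f).prod = ∏ c : Quotient r, f (fiberCard r c) := by
  rw [typeMS, Multiset.map_map, Finset.prod]
  rfl

/-- Permutations preserving each class pointwise-on-quotient. -/
lemma card_stabFun (r : Setoid (Fin n)) :
    Nat.card {σ : Equiv.Perm (Fin n) // (Quotient.mk r) ∘ σ = Quotient.mk r} =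
      ((typeMS r).map Nat.factorial).prod := by
  rw [Nat.card_eq_fintype_card, DomMulAct.stabilizer_card, typeMS_map_prod]
  congr 1
  ext c
  rw [fiberCard, Nat.card_eq_fintype_card]


instance : MulAction (Equiv.Perm (Fin n)) (Setoid (Fin n)) where
  smul σ r := Setoid.comap (⇑σ⁻¹) r
  one_smul r := Setoid.ext fun a b => by
    exact Iff.rfl
  mul_smul σ τ r := Setoid.ext fun a b => by
    exact Iff.rfl

lemma smul_rel (σ : Equiv.Perm (Fin n)) (r : Setoid (Fin n)) (i j : Fin n) :
    (σ • r) i j ↔ r (σ⁻¹ i) (σ⁻¹ j) := Iff.rfl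

/-- The quotient equivalence induced by the action. -/
def quotEquivSmul (σ : Equiv.Perm (Fin n)) (r : Setoid (Fin n)) :
    Quotient r ≃ Quotient (σ • r) :=
  Quotient.congr (σ : Fin n ≃ Fin n) (fun a b => by
    rw [smul_rel]; simp)

@[simp] lemma quotEquivSmul_mk (σ : Equiv.Perm (Fin n)) (r : Setoid (Fin n)) (i : Fin n) :
    quotEquivSmul σ r (Quotient.mk r i) = Quotient.mk (σ • r) (σ i) := rfl

lemma fiberCard_quotEquivSmul (σ : Equiv.Perm (Fin n)) (r : Setoid (Fin n)) (c : Quotient r) :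
    fiberCard (σ • r) (quotEquivSmul σ r c) = fiberCard r c := by
  obtain ⟨j, rfl⟩ := Quotient.exists_rep c
  rw [fiberCard, fiberCard]
  apply Nat.card_congr
  refine Equiv.subtypeEquiv (σ.symm : Fin n ≃ Fin n) (fun i => ?_)
  rw [quotEquivSmul_mk, Quotient.eq, Quotient.eq, smul_rel]
  simp only [Equiv.Perm.inv_apply_self]
  exact Iff.rfl

lemma typeMS_smul (σ : Equiv.Perm (Fin n)) (r : Setoid (Fin n)) :
    typeMS (σ • r) = typeMS r := by
  rw [typeMS, typeMS, ← multiset_map_univ_equiv (quotEquivSmul σ r) (fiberCard (σ • r))]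
  exact Multiset.map_congr rfl fun c _ => fiberCard_quotEquivSmul σ r c

lemma mk_eq_iff (r : Setoid (Fin n)) (i j : Fin n) :
    Quotient.mk r i = Quotient.mk r j ↔ r i j := Quotient.eq

/-- Transitivity: setoids with equal type are in the same orbit. -/
lemma mem_orbit_of_typeMS_eq {r r' : Setoid (Fin n)} (h : typeMS r' = typeMS r) :
    r' ∈ MulAction.orbit (Equiv.Perm (Fin n)) r := by
  -- first get an equivalence of quotients preserving fiber cards
  obtain ⟨e, he⟩ := exists_equiv_of_card_fiber_eq (fiberCard r) (fiberCard r')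
    (fun m => by
      rw [← count_typeMS, ← count_typeMS, h])
  -- then glue a permutation
  obtain ⟨σ, hσ⟩ := exists_equiv_of_card_fiber_eq
    (fun i => e (Quotient.mk r i)) (Quotient.mk r')
    (fun c => by
      have h1 : Nat.card {i // e (Quotient.mk r i) = c}
          = Nat.card {i // Quotient.mk r i = e.symm c} := by
        apply Nat.card_congr
        exact Equiv.subtypeEquiv (Equiv.refl _) (fun i => by
          simp [Equiv.eq_symm_apply])
      rw [h1]
      have h2 := he (e.symm c)
      rw [Equiv.apply_symm_apply] at h2
      rw [show Nat.card {i // Quotient.mk r i = e.symm c} = fiberCard r (e.symm c) from rfl,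
        ← h2]
      rfl)
  refine ⟨σ, Setoid.ext fun a b => ?_⟩
  constructor
  · intro hab
    have h1 : Quotient.mk r (σ⁻¹ a) = Quotient.mk r (σ⁻¹ b) := (mk_eq_iff r _ _).mpr hab
    have h2 := congrArg e h1
    rw [← hσ, ← hσ] at h2
    simp only [Equiv.Perm.apply_inv_self] at h2
    exact (mk_eq_iff r' a b).mp h2
  · intro hab
    have h1 : Quotient.mk r' (σ (σ⁻¹ a)) = Quotient.mk r' (σ (σ⁻¹ b)) := by
      simpa using (mk_eq_iff r' a b).mpr hab
    rw [hσ, hσ] at h1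
    exact (mk_eq_iff r _ _).mp (e.injective h1)


lemma stab_rel {r : Setoid (Fin n)} {σ : Equiv.Perm (Fin n)} (hσ : σ • r = r) (x y : Fin n) :
    r (σ x) (σ y) ↔ r x y := by
  constructor
  · intro h2
    have h3 : (σ • r) (σ x) (σ y) := by rwa [hσ]
    have h4 : r (σ⁻¹ (σ x)) (σ⁻¹ (σ y)) := h3
    simpa using h4
  · intro h2
    have h3 : (σ • r) (σ x) (σ y) := by
      show r (σ⁻¹ (σ x)) (σ⁻¹ (σ y))
      simpa using h2
    rwa [hσ] at h3

/-- Permutation of the quotient induced by a stabilizing permutation. -/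
def permQuot {r : Setoid (Fin n)} (σ : MulAction.stabilizer (Equiv.Perm (Fin n)) r) :
    Equiv.Perm (Quotient r) :=
  Quotient.congr (σ.1 : Fin n ≃ Fin n) (fun a b => (stab_rel σ.2 a b).symm)

@[simp] lemma permQuot_mk {r : Setoid (Fin n)} (σ : MulAction.stabilizer (Equiv.Perm (Fin n)) r)
    (i : Fin n) : permQuot σ (Quotient.mk r i) = Quotient.mk r (σ.1 i) := rfl

/-- The homomorphism from the stabilizer of `r` to permutations of the quotient. -/
def piHom (r : Setoid (Fin n)) :
    MulAction.stabilizer (Equiv.Perm (Fin n)) r →* Equiv.Perm (Quotient r) where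
  toFun := permQuot
  map_one' := Equiv.ext fun c => Quotient.inductionOn c fun _ => rfl
  map_mul' σ τ := Equiv.ext fun c => Quotient.inductionOn c fun _ => rfl

lemma card_ker (r : Setoid (Fin n)) :
    Nat.card (piHom r).ker = ((typeMS r).map Nat.factorial).prod := by
  rw [← card_stabFun r]
  apply Nat.card_congr
  refine
    { toFun := fun x => ⟨x.1.1, funext fun i => Equiv.ext_iff.mp x.2 (Quotient.mk r i)⟩
      invFun := fun y => ⟨⟨y.1, ?_⟩, ?_⟩
      left_inv := fun x => rfl
      right_inv := fun y => rfl }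
  · rw [MulAction.mem_stabilizer_iff]
    refine Setoid.ext fun a b => ?_
    have hy : ∀ i, Quotient.mk r (y.1 i) = Quotient.mk r i := fun i => congrFun y.2 i
    have h1 : ∀ a : Fin n, Quotient.mk r (y.1⁻¹ a) = Quotient.mk r a := fun a => by
      conv_rhs => rw [← Equiv.Perm.apply_inv_self y.1 a]
      rw [hy]
    constructor
    · intro hab
      have h2 : r (y.1⁻¹ a) (y.1⁻¹ b) := hab
      have := (mk_eq_iff r _ _).mpr h2
      rw [h1, h1] at this
      exact (mk_eq_iff r _ _).mp this
    · intro hab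
      show r (y.1⁻¹ a) (y.1⁻¹ b)
      refine (mk_eq_iff r _ _).mp ?_
      rw [h1, h1]
      exact (mk_eq_iff r _ _).mpr hab
  · rw [MonoidHom.mem_ker]
    refine Equiv.ext fun c => Quotient.inductionOn c fun i => ?_
    show Quotient.mk r (y.1 i) = Quotient.mk r i
    exact congrFun y.2 i

lemma mem_range_piHom_iff {r : Setoid (Fin n)} (e : Equiv.Perm (Quotient r)) :
    e ∈ (piHom r).range ↔ (fiberCard r) ∘ e = fiberCard r := by
  constructor
  · rintro ⟨σ, rfl⟩
    funext c
    obtain ⟨j, rfl⟩ := Quotient.exists_rep c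
    show fiberCard r (Quotient.mk r (σ.1 j)) = fiberCard r (Quotient.mk r j)
    apply Nat.card_congr
    refine Equiv.subtypeEquiv (σ.1.symm : Fin n ≃ Fin n) (fun i => ?_)
    rw [mk_eq_iff, mk_eq_iff]
    have : r i (σ.1 j) ↔ r (σ.1 (σ.1⁻¹ i)) (σ.1 j) := by
      rw [Equiv.Perm.apply_inv_self]
    rw [this, stab_rel σ.2]
    exact Iff.rfl
  · intro he
    obtain ⟨σ, hσ⟩ := exists_equiv_of_card_fiber_eq
      (fun i => e (Quotient.mk r i)) (Quotient.mk r)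
      (fun c => by
        have h1 : Nat.card {i // e (Quotient.mk r i) = c}
            = Nat.card {i // Quotient.mk r i = e.symm c} :=
          Nat.card_congr (Equiv.subtypeEquiv (Equiv.refl _) (fun i => by
            simp [Equiv.eq_symm_apply]))
        have h2 := congrFun he (e.symm c)
        simp only [Function.comp_apply, Equiv.apply_symm_apply] at h2
        rw [h1]
        exact h2.symm)
    have hmem : (σ : Equiv.Perm (Fin n)) ∈ MulAction.stabilizer (Equiv.Perm (Fin n)) r := by
      rw [MulAction.mem_stabilizer_iff]
      refine Setoid.ext fun a b => ?_
      constructor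
      · intro hab
        have h1 : Quotient.mk r (σ⁻¹ a) = Quotient.mk r (σ⁻¹ b) := (mk_eq_iff r _ _).mpr hab
        have h2 := congrArg e h1
        rw [← hσ, ← hσ] at h2
        simp only [Equiv.Perm.apply_inv_self] at h2
        exact (mk_eq_iff r a b).mp h2
      · intro hab
        have h1 : Quotient.mk r (σ (σ⁻¹ a)) = Quotient.mk r (σ (σ⁻¹ b)) := by
          simpa using (mk_eq_iff r a b).mpr hab
        rw [hσ, hσ] at h1
        exact (mk_eq_iff r _ _).mp (e.injective h1)
    refine ⟨⟨σ, hmem⟩, ?_⟩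
    refine Equiv.ext fun c => Quotient.inductionOn c fun i => ?_
    show Quotient.mk r (σ i) = e (Quotient.mk r i)
    exact hσ i

lemma card_range_piHom (r : Setoid (Fin n)) :
    Nat.card (piHom r).range
      = ∏ m ∈ (typeMS r).toFinset, ((typeMS r).count m).factorial := by
  have e1 : {e : Equiv.Perm (Quotient r) // e ∈ (piHom r).range}
      ≃ {e : Equiv.Perm (Quotient r) // (fiberCard r) ∘ e = fiberCard r} :=
    Equiv.subtypeEquivRight fun e => mem_range_piHom_iff e
  rw [show Nat.card (piHom r).range
      = Fintype.card {e : Equiv.Perm (Quotient r) // (fiberCard r) ∘ e = fiberCard r} from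
    (Nat.card_congr e1).trans Nat.card_eq_fintype_card, DomMulAct.stabilizer_card']
  have himg : Finset.univ.image (fiberCard r) = (typeMS r).toFinset := by
    rw [typeMS, Multiset.toFinset_map, Finset.val_toFinset]
  rw [himg]
  refine Finset.prod_congr rfl fun m _ => ?_
  rw [count_typeMS, Nat.card_eq_fintype_card]

lemma card_stabilizer (r : Setoid (Fin n)) :
    Nat.card (MulAction.stabilizer (Equiv.Perm (Fin n)) r)
      = (∏ m ∈ (typeMS r).toFinset, ((typeMS r).count m).factorial)
        * ((typeMS r).map Nat.factorial).prod := by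
  rw [Subgroup.card_eq_card_quotient_mul_card_subgroup (piHom r).ker,
    Nat.card_congr (QuotientGroup.quotientKerEquivRange (piHom r)).toEquiv,
    card_ker, card_range_piHom]

lemma card_type_class (r : Setoid (Fin n)) :
    Nat.card {r' : Setoid (Fin n) // typeMS r' = typeMS r}
      * Nat.card (MulAction.stabilizer (Equiv.Perm (Fin n)) r) = n.factorial := by
  have e1 : {r' : Setoid (Fin n) // typeMS r' = typeMS r}
      ≃ (MulAction.orbit (Equiv.Perm (Fin n)) r : Set (Setoid (Fin n))) :=
    Equiv.subtypeEquivRight fun r' =>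
      ⟨fun h => mem_orbit_of_typeMS_eq h, fun h => by
        obtain ⟨σ, rfl⟩ := h
        exact typeMS_smul σ r⟩
  rw [Nat.card_congr e1]
  letI : Fintype (MulAction.orbit (Equiv.Perm (Fin n)) r : Set (Setoid (Fin n))) :=
    Fintype.ofFinite _
  letI : Fintype (MulAction.stabilizer (Equiv.Perm (Fin n)) r) := Fintype.ofFinite _
  rw [Nat.card_eq_fintype_card, Nat.card_eq_fintype_card,
    MulAction.card_orbit_mul_card_stabilizer_eq_card_group, Fintype.card_perm, Fintype.card_fin]


lemma exists_list_counts (l : List ℕ) :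
    ∃ L : List ℕ, L.length = l.sum ∧ (∀ x ∈ L, x < l.length) ∧
      ∀ j : Fin l.length, L.count j.val = l.get j := by
  induction l with
  | nil => exact ⟨[], rfl, by simp, fun j => j.elim0⟩
  | cons a t ih =>
    obtain ⟨L', h1, h2, h3⟩ := ih
    refine ⟨List.replicate a 0 ++ L'.map (· + 1), by simp [h1], ?_, ?_⟩
    · intro x hx
      rcases List.mem_append.mp hx with hx | hx
      · rw [List.eq_of_mem_replicate hx]
        simp
      · obtain ⟨y, hy, rfl⟩ := List.mem_map.mp hx
        simpa using Nat.succ_lt_succ (h2 y hy)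
    · intro j
      rcases Fin.eq_zero_or_eq_succ j with rfl | ⟨k, rfl⟩
      · simp only [List.count_append, Fin.val_zero]
        rw [List.count_replicate_self]
        have : (L'.map (· + 1)).count 0 = 0 := by
          rw [List.count_eq_zero]
          intro h
          obtain ⟨y, -, hy⟩ := List.mem_map.mp h
          omega
        simp [this]
      · simp only [List.count_append, Fin.val_succ]
        have hrep : (List.replicate a 0).count (k.val + 1) = 0 := by
          rw [List.count_replicate]
          simp
        have hmap : (L'.map (· + 1)).count (k.val + 1) = L'.count k.val := by
          have := List.count_map_of_injective L' (· + 1) (fun x y h => by simpa using h) k.val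
          simpa using this
        rw [hrep, hmap, h3 k]
        simp

lemma exists_typeMS {s : Multiset ℕ} (hpos : ∀ x ∈ s, 0 < x) (hsum : s.sum = n) :
    ∃ r : Setoid (Fin n), typeMS r = s := by
  set l := s.toList with hl
  have hlsum : l.sum = n := by rw [hl, Multiset.sum_toList, hsum]
  obtain ⟨L, h1, h2, h3⟩ := exists_list_counts l
  have hLn : L.length = n := by rw [h1, hlsum]
  set f : Fin n → Fin l.length := fun i => ⟨L.get (Fin.cast hLn.symm i), by
    exact h2 _ (L.get_mem _)⟩ with hf
  have hfval : ∀ i : Fin n, (f i).val = L.get (Fin.cast hLn.symm i) := fun i => rfl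
  have hfsurj : Function.Surjective f := by
    intro j
    have hmem : l.get j ∈ s := by
      have h' : l.get j ∈ l := by
        have := l.get_mem j
        simpa using this
      exact Multiset.mem_toList.mp h'
    have hposj : 0 < L.count j.val := by rw [h3 j]; exact hpos _ hmem
    have : (j : ℕ) ∈ L := List.count_pos_iff.mp hposj
    obtain ⟨i', hi'⟩ := List.mem_iff_get.mp this
    refine ⟨Fin.cast hLn i', ?_⟩
    apply Fin.ext
    rw [hfval]
    simpa using hi'
  set E : Quotient (Setoid.ker f) ≃ Fin l.length :=
    Equiv.ofBijective (Quotient.lift f (fun a b h => h))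
      ⟨fun x y => Quotient.inductionOn₂ x y fun a b h => Quotient.sound h,
       fun j => (hfsurj j).elim fun i hi => ⟨Quotient.mk (Setoid.ker f) i, hi⟩⟩ with hE
  have hEmk : ∀ i : Fin n, E (Quotient.mk (Setoid.ker f) i) = f i := fun i => rfl
  refine ⟨Setoid.ker f, ?_⟩
  have hmap := multiset_map_univ_equiv (E.symm) (fiberCard (Setoid.ker f))
  rw [typeMS, ← hmap]
  have hfib : ∀ j : Fin l.length, fiberCard (Setoid.ker f) (E.symm j) = l.get j := by
    intro j
    rw [fiberCard]
    have e1 : {i // Quotient.mk (Setoid.ker f) i = E.symm j} ≃ {i // f i = j} :=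
      Equiv.subtypeEquivRight fun i => by rw [← hEmk i, Equiv.eq_symm_apply]
    have e2 : {i // f i = j} ≃ {i' : Fin L.length // L.get i' = j.val} :=
      Equiv.subtypeEquiv (finCongr hLn.symm) fun i => by
        rw [Fin.ext_iff, hfval]
        exact Iff.rfl
    rw [Nat.card_congr (e1.trans e2), card_fiber_eq_count L.get j.val]
    have huniv : (Finset.univ.val.map L.get) = (L : Multiset ℕ) := by
      rw [Fin.univ_def]
      show Multiset.map L.get ↑(List.finRange L.length) = _
      rw [Multiset.map_coe, List.map_get_finRange]
    rw [huniv, Multiset.coe_count, h3 j]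
  rw [Multiset.map_congr rfl (fun j _ => hfib j)]
  have huniv2 : (Finset.univ.val.map (fun j : Fin l.length => l.get j)) = (l : Multiset ℕ) := by
    rw [Fin.univ_def]
    show Multiset.map l.get ↑(List.finRange l.length) = _
    rw [Multiset.map_coe, List.map_get_finRange]
  rw [huniv2, hl, Multiset.coe_toList]


/-! ### The linear-algebra side -/

/-- The permutation matrix as a linear equivalence. -/
noncomputable def Pmat (σ : Equiv.Perm (Fin n)) : (Fin n → ℝ) ≃ₗ[ℝ] (Fin n → ℝ) where
  toFun v := fun i => v (σ⁻¹ i)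
  invFun v := fun i => v (σ i)
  map_add' _ _ := rfl
  map_smul' _ _ := rfl
  left_inv v := funext fun i => by simp
  right_inv v := funext fun i => by simp

/-- The subspace of vectors constant on the classes of `r`. -/
def subOf (r : Setoid (Fin n)) : Submodule ℝ (Fin n → ℝ) where
  carrier := {v | ∀ i j, r i j → v i = v j}
  add_mem' := fun ha hb i j hij => by simp [ha i j hij, hb i j hij]
  zero_mem' := fun i j _ => rfl
  smul_mem' := fun c v hv i j hij => by simp [hv i j hij]

lemma mem_subOf {r : Setoid (Fin n)} {v : Fin n → ℝ} :
    v ∈ subOf r ↔ ∀ i j, r i j → v i = v j := Iff.rfl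

/-- Indicator vector of the class of `i`. -/
noncomputable def chi (r : Setoid (Fin n)) (i : Fin n) : Fin n → ℝ :=
  fun k => if r k i then 1 else 0

lemma chi_mem (r : Setoid (Fin n)) (i : Fin n) : chi r i ∈ subOf r := by
  intro a b hab
  unfold chi
  have : r a i ↔ r b i := ⟨fun h => r.trans (r.symm hab) h, fun h => r.trans hab h⟩
  simp only [this]

lemma subOf_rel_iff {r : Setoid (Fin n)} {i j : Fin n} :
    (∀ v ∈ subOf r, v i = v j) ↔ r i j := by
  constructor
  · intro h
    have := h (chi r j) (chi_mem r j)
    unfold chi at this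
    have hjj : r j j := Setoid.refl j
    rw [if_pos hjj] at this
    by_contra hij
    rw [if_neg hij] at this
    norm_num at this
  · intro hij v hv
    exact hv i j hij

lemma subOf_injective : Function.Injective (subOf (n := n)) := by
  intro r s h
  refine Setoid.ext fun a b => ?_
  rw [← subOf_rel_iff (r := r), ← subOf_rel_iff (r := s), h]

lemma braidLattice_eq_range : braidLattice n = Set.range (subOf (n := n)) := by
  ext Z
  constructor
  · rintro ⟨T, hT, rfl⟩
    set Z := sInf ((fun p : Fin n × Fin n => braidHyperplane p.1 p.2) '' T) with hZ
    refine ⟨⟨fun i j => ∀ v ∈ Z, v i = v j,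
      ⟨fun i v _ => rfl, fun h v hv => (h v hv).symm,
       fun h1 h2 v hv => (h1 v hv).trans (h2 v hv)⟩⟩, ?_⟩
    ext v
    rw [mem_subOf]
    constructor
    · intro hv
      rw [hZ, Submodule.mem_sInf]
      rintro p ⟨⟨i, j⟩, hij, rfl⟩
      refine hv i j fun w hw => ?_
      exact Submodule.mem_sInf.mp hw _ ⟨(i, j), hij, rfl⟩
    · intro hv i j hij
      exact hij v hv
  · rintro ⟨r, rfl⟩
    refine ⟨{p | p.1 ≠ p.2 ∧ r p.1 p.2}, fun p hp => hp.1, ?_⟩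
    ext v
    rw [mem_subOf, Submodule.mem_sInf]
    constructor
    · intro hv p hp
      obtain ⟨⟨i, j⟩, hij, rfl⟩ := hp
      exact hv i j hij.2
    · intro hv i j hij
      by_cases hne : i = j
      · rw [hne]
      · exact hv _ ⟨(i, j), ⟨hne, hij⟩, rfl⟩

/-- The parametrization of the arrangement monoid. -/
noncomputable def Phi (x : Equiv.Perm (Fin n) × Setoid (Fin n)) :
    (Fin n → ℝ) →ₗ.[ℝ] (Fin n → ℝ) :=
  ((Pmat x.1 : (Fin n → ℝ) ≃ₗ[ℝ] (Fin n → ℝ)) :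
    (Fin n → ℝ) →ₗ[ℝ] (Fin n → ℝ)).toPMap (subOf x.2)

lemma MGB_eq : MGB (weylA n) (braidLattice n) = Set.range (Phi (n := n)) := by
  ext p
  constructor
  · rintro ⟨g, ⟨σ, hσ⟩, X, hX, rfl⟩
    rw [braidLattice_eq_range] at hX
    obtain ⟨r, rfl⟩ := hX
    refine ⟨(σ, r), ?_⟩
    rw [Phi]
    congr 1
    exact LinearMap.ext fun v => funext fun i => (hσ v i).symm
  · rintro ⟨⟨σ, r⟩, rfl⟩
    exact ⟨Pmat σ, ⟨σ, fun v i => rfl⟩, subOf r,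
      braidLattice_eq_range ▸ Set.mem_range_self r, rfl⟩

lemma Phi_domain (x : Equiv.Perm (Fin n) × Setoid (Fin n)) :
    (Phi x).domain = subOf x.2 := rfl

lemma Phi_eq_iff {σ τ : Equiv.Perm (Fin n)} {r s : Setoid (Fin n)} :
    Phi (σ, r) = Phi (τ, s) ↔
      r = s ∧ ∀ i, Quotient.mk r (σ⁻¹ i) = Quotient.mk r (τ⁻¹ i) := by
  constructor
  · intro h
    have hdom : subOf r = subOf s := by
      have := congrArg LinearPMap.domain h
      rwa [Phi_domain, Phi_domain] at this
    have hrs : r = s := subOf_injective hdom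
    subst hrs
    refine ⟨rfl, fun i => ?_⟩
    obtain ⟨hd, h2⟩ := LinearPMap.ext_iff.mp h
    rw [mk_eq_iff]
    by_contra hrel
    have hv := h2 (x := chi r (τ⁻¹ i)) (hf := chi_mem r (τ⁻¹ i))
      (hg := chi_mem r (τ⁻¹ i))
    have hvi := congrFun hv i
    have hL : (Phi (σ, r)) ⟨chi r (τ⁻¹ i), chi_mem r (τ⁻¹ i)⟩ i
        = chi r (τ⁻¹ i) (σ⁻¹ i) := rfl
    have hR : (Phi (τ, r)) ⟨chi r (τ⁻¹ i), chi_mem r (τ⁻¹ i)⟩ i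
        = chi r (τ⁻¹ i) (τ⁻¹ i) := rfl
    rw [hL, hR] at hvi
    unfold chi at hvi
    have hjj : r (τ⁻¹ i) (τ⁻¹ i) := Setoid.refl _
    rw [if_neg hrel, if_pos hjj] at hvi
    norm_num at hvi
  · rintro ⟨rfl, h⟩
    refine LinearPMap.ext rfl ?_
    intro v hv hw
    show (fun i => v (σ⁻¹ i)) = fun i => v (τ⁻¹ i)
    funext i
    exact hv _ _ ((mk_eq_iff r _ _).mp (h i))

/-- Permutations fixing every class of `r` setwise. -/
def blockStab (r : Setoid (Fin n)) : Subgroup (Equiv.Perm (Fin n)) where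
  carrier := {σ | ∀ i, Quotient.mk r (σ i) = Quotient.mk r i}
  one_mem' := fun i => rfl
  mul_mem' := fun {a b} ha hb i => by
    rw [Equiv.Perm.mul_apply, ha (b i), hb i]
  inv_mem' := fun {a} ha i => by
    conv_rhs => rw [← Equiv.Perm.apply_inv_self a i]
    rw [ha]

lemma card_blockStab (r : Setoid (Fin n)) :
    Nat.card (blockStab r) = ((typeMS r).map Nat.factorial).prod := by
  rw [← card_stabFun r]
  exact Nat.card_congr (Equiv.subtypeEquivRight fun σ =>
    ⟨fun h => funext fun i => h i, fun h i => congrFun h i⟩)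

lemma card_range_Phi (r : Setoid (Fin n)) :
    Nat.card (Set.range (fun σ => Phi (n := n) (σ, r)))
      * ((typeMS r).map Nat.factorial).prod = n.factorial := by
  have hker : Setoid.ker (fun σ => Phi (n := n) (σ, r))
      = QuotientGroup.leftRel (blockStab r) := by
    refine Setoid.ext fun σ τ => ?_
    rw [QuotientGroup.leftRel_apply]
    show Phi (σ, r) = Phi (τ, r) ↔ _
    rw [Phi_eq_iff]
    constructor
    · rintro ⟨-, h⟩ i
      rw [Equiv.Perm.mul_apply]
      have h2 := h (τ i)
      rwa [show Quotient.mk r (τ⁻¹ (τ i)) = Quotient.mk r i by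
        rw [Equiv.Perm.inv_apply_self]] at h2
    · intro h
      refine ⟨rfl, fun i => ?_⟩
      have h2 := h (τ⁻¹ i)
      rw [Equiv.Perm.mul_apply, Equiv.Perm.apply_inv_self] at h2
      exact h2
  have e2 : Nat.card (Set.range (fun σ => Phi (n := n) (σ, r)))
      = Nat.card (Equiv.Perm (Fin n) ⧸ blockStab r) := by
    rw [Nat.card_congr (Setoid.quotientKerEquivRange
      (fun σ => Phi (n := n) (σ, r))).symm]
    congr 1
    rw [hker]
    rfl
  rw [e2, ← card_blockStab r]
  have h3 := (Subgroup.card_eq_card_quotient_mul_card_subgroup (blockStab r)).symm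
  rw [h3, Nat.card_eq_fintype_card, Fintype.card_perm, Fintype.card_fin]

noncomputable instance : Fintype (Setoid (Fin n)) := Fintype.ofFinite _

lemma card_MGB_eq_sum :
    Nat.card (MGB (weylA n) (braidLattice n))
      = ∑ r : Setoid (Fin n),
          Nat.card (Set.range (fun σ => Phi (n := n) (σ, r))) := by
  rw [show MGB (weylA n) (braidLattice n) = Set.range (Phi (n := n)) from MGB_eq]
  let F : (Σ r : Setoid (Fin n),
      (Set.range (fun σ => Phi (n := n) (σ, r)) : Set _)) →
      (Set.range (Phi (n := n)) : Set _) := fun x =>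
    ⟨x.2.1, x.2.2.elim fun σ h => ⟨(σ, x.1), h⟩⟩
  have hbij : Function.Bijective F := by
    constructor
    · rintro ⟨r, ⟨p, hp⟩⟩ ⟨s, ⟨q, hq⟩⟩ h
      have hpq : p = q := congrArg Subtype.val h
      have hrs : r = s := by
        apply subOf_injective
        obtain ⟨σ, hσ⟩ := hp
        obtain ⟨τ, hτ⟩ := hq
        have h1 : subOf r = p.domain := by rw [← hσ]; rfl
        have h2 : subOf s = q.domain := by rw [← hτ]; rfl
        rw [h1, h2, hpq]
      subst hrs
      subst hpq
      rfl
    · rintro ⟨p, hp⟩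
      obtain ⟨⟨σ, r⟩, h⟩ := hp
      exact ⟨⟨r, ⟨p, ⟨σ, h⟩⟩⟩, rfl⟩
  rw [← Nat.card_congr (Equiv.ofBijective F hbij)]
  letI : ∀ r : Setoid (Fin n),
      Fintype (Set.range (fun σ => Phi (n := n) (σ, r)) : Set _) :=
    fun r => Fintype.ofFinite _
  rw [Nat.card_eq_fintype_card, Fintype.card_sigma]
  exact Finset.sum_congr rfl fun r _ => (Nat.card_eq_fintype_card).symm

lemma bLambda_eq (s : Multiset ℕ) :
    bLambda s = (∏ m ∈ s.toFinset, (s.count m).factorial)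
      * (s.map Nat.factorial).prod := by
  rw [bLambda, Finset.prod_mul_distrib, Finset.prod_multiset_map_count]

lemma N_mul (lam : Nat.Partition n) :
    Nat.card {r : Setoid (Fin n) // typeMS r = lam.parts} * bLambda lam.parts
      = n.factorial := by
  obtain ⟨r₀, hr₀⟩ := exists_typeMS (fun x hx => lam.parts_pos hx) lam.parts_sum
  have h1 := card_type_class r₀
  rw [card_stabilizer, hr₀] at h1
  rw [bLambda_eq, ← mul_assoc] at *
  exact h1

end CAMA

open CAMA

/-- The reflection arrangement monoid of type `A_{n-1}` has
order `(n!)² Σ_λ 1/(b_λ · λ₁!⋯λ_p!)`, the sum over all partitions `λ` of `n`. -/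
theorem card_arrangement_monoid_A (n : ℕ) (hn : 1 ≤ n) :
    (Nat.card (MGB (weylA n) (braidLattice n)) : ℚ) =
      (n.factorial : ℚ) ^ 2 *
        ∑ lam : n.Partition,
          1 / ((bLambda lam.parts : ℚ) * (lam.parts.map fun i => (i.factorial : ℚ)).prod) := by
  classical
  rw [card_MGB_eq_sum, Nat.cast_sum]
  have key : ∀ r : Setoid (Fin n),
      (Nat.card (Set.range (fun σ => Phi (n := n) (σ, r))) : ℚ)
        = (n.factorial : ℚ) / (((typeMS r).map Nat.factorial).prod : ℚ) := by
    intro r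
    have h := card_range_Phi r
    have hpos : 0 < ((typeMS r).map Nat.factorial).prod :=
      Multiset.prod_pos fun x hx => by
        obtain ⟨m, -, rfl⟩ := Multiset.mem_map.mp hx
        exact Nat.factorial_pos m
    rw [eq_div_iff (by exact_mod_cast hpos.ne')]
    exact_mod_cast h
  rw [Finset.sum_congr rfl fun r _ => key r]
  -- group the sum by partition type
  set g : Setoid (Fin n) → n.Partition :=
    fun r => ⟨typeMS r, fun hi => typeMS_pos r hi, typeMS_sum r⟩ with hg
  have hfib := Finset.sum_fiberwise_eq_sum_filter Finset.univ Finset.univ g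
    (fun r => (n.factorial : ℚ) / (((typeMS r).map Nat.factorial).prod : ℚ))
  simp only [Finset.mem_univ, Finset.filter_true] at hfib
  rw [← hfib, Finset.mul_sum]
  refine Finset.sum_congr rfl fun lam _ => ?_
  -- the inner sum is constant on the fiber
  have hconst : ∀ r ∈ Finset.univ.filter (fun r => g r = lam),
      (n.factorial : ℚ) / (((typeMS r).map Nat.factorial).prod : ℚ)
        = (n.factorial : ℚ) / ((lam.parts.map Nat.factorial).prod : ℚ) := by
    intro r hr
    have : typeMS r = lam.parts := by
      have := (Finset.mem_filter.mp hr).2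
      rw [← this, hg]
    rw [this]
  rw [Finset.sum_congr rfl hconst, Finset.sum_const]
  have hcard : (Finset.univ.filter (fun r => g r = lam)).card
      = Nat.card {r : Setoid (Fin n) // typeMS r = lam.parts} := by
    rw [Nat.card_eq_fintype_card, Fintype.card_subtype]
    congr 1
    apply Finset.filter_congr
    intro r _
    constructor
    · intro h
      rw [← h, hg]
    · intro h
      rw [hg]
      exact Nat.Partition.ext h
  rw [hcard, nsmul_eq_mul]
  -- final arithmetic
  have hN := N_mul lam
  have hBQ : (lam.parts.map fun i => (i.factorial : ℚ)).prod
      = ((lam.parts.map Nat.factorial).prod : ℚ) := by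
    rw [Nat.cast_multiset_prod, Multiset.map_map]
    rfl
  have hbL : (0 : ℚ) < (bLambda lam.parts : ℚ) := by
    have : 0 < bLambda lam.parts := by
      rw [bLambda]
      apply Finset.prod_pos
      intro i _
      exact Nat.mul_pos (Nat.factorial_pos _) (Nat.pow_pos (Nat.factorial_pos i))
    exact_mod_cast this
  have hB : (0 : ℚ) < ((lam.parts.map Nat.factorial).prod : ℚ) := by
    have : 0 < (lam.parts.map Nat.factorial).prod :=
      Multiset.prod_pos fun x hx => by
        obtain ⟨m, -, rfl⟩ := Multiset.mem_map.mp hx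
        exact Nat.factorial_pos m
    exact_mod_cast this
  have hNQ : (Nat.card {r : Setoid (Fin n) // typeMS r = lam.parts} : ℚ)
      * (bLambda lam.parts : ℚ) = (n.factorial : ℚ) := by exact_mod_cast hN
  rw [hBQ]
  have hNval : (Nat.card {r : Setoid (Fin n) // typeMS r = lam.parts} : ℚ)
      = (n.factorial : ℚ) / (bLambda lam.parts : ℚ) := by
    rw [eq_div_iff hbL.ne']
    exact hNQ
  rw [hNval, div_mul_div_comm, mul_one_div, ← pow_two]
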